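/- Let A and B be nilpotent n×n matrices in Jordan normal form. If there exists an invertible matrix C with ‖C‖, ‖C^{-1}‖ ≤ ξ and ‖AC - CB‖ = ε < 1/(n · n! · ξ^n), then A and B have the same Jordan structure, i.e., the same number of Jordan blocks of each dimension k for every k ≥ 1. -/
import Mathlib


open Matrix

/-- The (Euclidean) operator norm of a complex matrix. -/
noncomputable def opNorm {ι κ : Type*} [Fintype ι] [Fintype κ] [DecidableEq κ]
    (M : Matrix ι κ ℂ) : ℝ :=
  ‖LinearMap.toContinuousLinearMap (Matrix.toEuclideanLin M)‖

/-- A nilpotent matrix in Jordan normal form: entries `0` or `1`, supported on the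
superdiagonal. -/
def IsNilpotentJordan {k : ℕ} (M : Matrix (Fin k) (Fin k) ℂ) : Prop :=
  ∀ p q : Fin k, ((q : ℕ) ≠ (p : ℕ) + 1 → M p q = 0) ∧ (M p q = 0 ∨ M p q = 1)

section Aux

open Module
open scoped Matrix.Norms.L2Operator InnerProductSpace ComplexOrder

variable {n : ℕ}

lemma opNorm_eq_norm (M : Matrix (Fin n) (Fin n) ℂ) : opNorm M = ‖M‖ := rfl

lemma toEuclideanLin_mul' (A B : Matrix (Fin n) (Fin n) ℂ) :
    toEuclideanLin (A * B) = (toEuclideanLin A) ∘ₗ (toEuclideanLin B) := by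
  rw [toEuclideanLin_eq_toLin]
  exact toLin_mul _ _ _ A B

lemma rank_eq_finrank_range' (M : Matrix (Fin n) (Fin n) ℂ) :
    M.rank = finrank ℂ (LinearMap.range (toEuclideanLin M)) := by
  rw [toEuclideanLin_eq_toLin]; exact M.rank_eq_finrank_range_toLin _ _

/-- Rank stability: if `N` is a partial isometry (in the sense that `NᴴN` is a 0-1
diagonal matrix) and `M` is within operator-norm distance `< 1` of `N`, then
`rank N ≤ rank M`. -/
lemma rank_le_of_close (M N : Matrix (Fin n) (Fin n) ℂ) (d : Fin n → ℂ)
    (hD : Nᴴ * N = diagonal d) (hd : ∀ i, d i * d i = d i)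
    (h : ‖M - N‖ < 1) : N.rank ≤ M.rank := by
  set f := toEuclideanLin M with hf
  set g := toEuclideanLin N with hg
  set P := toEuclideanLin (diagonal d) with hP
  set W := LinearMap.range P with hW
  -- P is idempotent
  have hPP : ∀ x, P (P x) = P x := by
    intro x
    have : diagonal d * diagonal d = diagonal d := by
      rw [diagonal_mul_diagonal]
      exact congrArg _ (funext hd)
    calc P (P x) = toEuclideanLin (diagonal d * diagonal d) x := by
          rw [toEuclideanLin_mul']; rfl
      _ = P x := by rw [this]
  have hfix : ∀ x ∈ W, P x = x := by rintro x ⟨y, rfl⟩; exact hPP y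
  -- g is isometric on W
  have hiso : ∀ x ∈ W, ‖g x‖ = ‖x‖ := by
    intro x hx
    have h1 : ⟪g x, g x⟫_ℂ = ⟪x, x⟫_ℂ := by
      have h2 : toEuclideanLin (Nᴴ * N) x = x := by
        rw [hD]; exact hfix x hx
      calc ⟪g x, g x⟫_ℂ = ⟪x, toEuclideanLin Nᴴ (g x)⟫_ℂ := by
            rw [Matrix.toEuclideanLin_conjTranspose_eq_adjoint]
            rw [LinearMap.adjoint_inner_right]
        _ = ⟪x, x⟫_ℂ := by rw [← LinearMap.comp_apply, ← toEuclideanLin_mul', h2]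
    have h3 : ‖g x‖ ^ 2 = ‖x‖ ^ 2 := by
      rw [inner_self_eq_norm_sq_to_K, inner_self_eq_norm_sq_to_K] at h1
      exact_mod_cast h1
    nlinarith [norm_nonneg (g x), norm_nonneg x, h3]
  -- f is injective on W
  have hinj : ∀ x ∈ W, f x = 0 → x = 0 := by
    intro x hx hfx
    by_contra hne
    have hxpos : (0:ℝ) < ‖x‖ := norm_pos_iff.mpr hne
    have hle : ‖g x - f x‖ ≤ ‖M - N‖ * ‖x‖ := by
      have := ContinuousLinearMap.le_opNorm
        (LinearMap.toContinuousLinearMap (toEuclideanLin (M - N))) x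
      have he : toEuclideanLin (M - N) x = f x - g x := by
        rw [map_sub]; rfl
      rw [l2_opNorm_def]
      calc ‖g x - f x‖ = ‖f x - g x‖ := norm_sub_rev _ _
        _ ≤ _ := by rw [← he]; exact this
    have : ‖x‖ ≤ ‖M - N‖ * ‖x‖ := by
      calc ‖x‖ = ‖g x‖ := (hiso x hx).symm
        _ = ‖g x - f x‖ := by rw [hfx, sub_zero]
        _ ≤ ‖M - N‖ * ‖x‖ := hle
    nlinarith
  -- conclude via finrank
  let h0 : W →ₗ[ℂ] EuclideanSpace ℂ (Fin n) := f.domRestrict W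
  have hker : LinearMap.ker h0 = ⊥ := by
    rw [LinearMap.ker_eq_bot']
    intro x hx
    exact Subtype.ext (hinj x.1 x.2 hx)
  have h4 : finrank ℂ W = finrank ℂ (LinearMap.range h0) := by
    have := h0.finrank_range_add_finrank_ker
    rw [hker, finrank_bot, add_zero] at this
    exact this.symm
  have h5 : LinearMap.range h0 ≤ LinearMap.range f := by
    rintro y ⟨x, rfl⟩; exact ⟨x.1, rfl⟩
  have h6 : N.rank = finrank ℂ W := by
    rw [← Matrix.rank_conjTranspose_mul_self, hD, rank_eq_finrank_range']
  rw [h6, rank_eq_finrank_range', h4]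
  exact Submodule.finrank_mono h5

/-- A matrix supported on the `k`-th superdiagonal with `0`/`1` entries. -/
def ShiftLike (k : ℕ) (M : Matrix (Fin n) (Fin n) ℂ) : Prop :=
  ∀ p q : Fin n, ((q : ℕ) ≠ (p : ℕ) + k → M p q = 0) ∧ (M p q = 0 ∨ M p q = 1)

lemma shiftLike_pow {A : Matrix (Fin n) (Fin n) ℂ} (hA : IsNilpotentJordan A) :
    ∀ k, ShiftLike k (A ^ k) := by
  intro k
  induction k with
  | zero =>
    intro p q
    constructor
    · intro hq
      rw [pow_zero]
      exact one_apply_ne fun h => hq (by rw [h, add_zero])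
    · rw [pow_zero, one_apply]
      split <;> simp
  | succ k ih =>
    intro p q
    rw [pow_succ]
    by_cases hr : ∃ r : Fin n, (r : ℕ) = (p : ℕ) + k
    · obtain ⟨r0, hr0⟩ := hr
      have hsum : (A ^ k * A) p q = (A ^ k) p r0 * A r0 q := by
        rw [mul_apply]
        apply Finset.sum_eq_single_of_mem r0 (Finset.mem_univ _)
        intro r _ hne
        rw [(ih p r).1 (fun h => hne (Fin.ext (h.trans hr0.symm))), zero_mul]
      constructor
      · intro hq
        rw [hsum, (hA r0 q).1 (fun h => hq (by omega)), mul_zero]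
      · rw [hsum]
        rcases (ih p r0).2 with h | h <;> rcases (hA r0 q).2 with h' | h' <;>
          simp [h, h']
    · have hsum : (A ^ k * A) p q = 0 := by
        rw [mul_apply]
        apply Finset.sum_eq_zero
        intro r _
        rw [(ih p r).1 (fun h => hr ⟨r, h⟩), zero_mul]
      exact ⟨fun _ => hsum, Or.inl hsum⟩

lemma shiftLike_eq_zero {M : Matrix (Fin n) (Fin n) ℂ} {k : ℕ} (h : ShiftLike k M)
    (hk : n ≤ k) : M = 0 := by
  ext p q
  exact (h p q).1 (by omega)

lemma shiftLike_diag {M : Matrix (Fin n) (Fin n) ℂ} {k : ℕ} (h : ShiftLike k M) :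
    ∃ d : Fin n → ℂ, Mᴴ * M = diagonal d ∧ ∀ i, d i * d i = d i := by
  refine ⟨fun i => (Mᴴ * M) i i, ?_, ?_⟩
  · ext p q
    by_cases hpq : p = q
    · subst hpq; rw [diagonal_apply_eq]
    · rw [diagonal_apply_ne _ hpq, mul_apply]
      apply Finset.sum_eq_zero
      intro r _
      by_cases h1 : (p : ℕ) = (r : ℕ) + k
      · rw [conjTranspose_apply, (h r q).1 (fun h2 => hpq (Fin.ext (by omega))), mul_zero]
      · rw [conjTranspose_apply, (h r p).1 h1, star_zero, zero_mul]
  · intro i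
    simp only [mul_apply, conjTranspose_apply]
    by_cases hr : ∃ r : Fin n, (i : ℕ) = (r : ℕ) + k
    · obtain ⟨r0, hr0⟩ := hr
      have hsum : ∑ r, star (M r i) * M r i = star (M r0 i) * M r0 i := by
        apply Finset.sum_eq_single_of_mem r0 (Finset.mem_univ _)
        intro r _ hne
        rw [(h r i).1 (fun h2 => hne (Fin.ext (by omega))), star_zero, zero_mul]
      rw [hsum]
      rcases (h r0 i).2 with h' | h' <;> simp [h']
    · have hsum : ∑ r, star (M r i) * M r i = 0 := by
        apply Finset.sum_eq_zero
        intro r _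
        rw [(h r i).1 (fun h2 => hr ⟨r, h2⟩), star_zero, zero_mul]
      rw [hsum, mul_zero]

lemma shiftLike_norm_le_one {M : Matrix (Fin n) (Fin n) ℂ} {k : ℕ} (h : ShiftLike k M) :
    ‖M‖ ≤ 1 := by
  obtain ⟨d, hD, hd⟩ := shiftLike_diag h
  have hd01 : ∀ i, d i = 0 ∨ d i = 1 := by
    intro i
    have h2 : d i * (d i - 1) = 0 := by linear_combination hd i
    rcases mul_eq_zero.mp h2 with h3 | h3
    · exact Or.inl h3
    · exact Or.inr (by linear_combination h3)
  have hDD : diagonal d * diagonal d = diagonal d := by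
    rw [diagonal_mul_diagonal]
    exact congrArg _ (funext hd)
  have hsd : star d = d := by
    funext i
    rcases hd01 i with h3 | h3 <;> simp [Pi.star_apply, h3]
  have hDH : (diagonal d)ᴴ = diagonal d := by
    rw [diagonal_conjTranspose, hsd]
  have hDn : ‖diagonal d‖ * ‖diagonal d‖ = ‖diagonal d‖ := by
    conv_lhs => rw [← Matrix.l2_opNorm_conjTranspose_mul_self]
    rw [hDH, hDD]
  have hMn : ‖M‖ * ‖M‖ = ‖diagonal d‖ := by
    rw [← Matrix.l2_opNorm_conjTranspose_mul_self, hD]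
  have hDle : ‖diagonal d‖ ≤ 1 := by nlinarith [norm_nonneg (diagonal d)]
  nlinarith [norm_nonneg M]

end Aux

/-- Two nilpotent Jordan matrices approximately intertwined by a bounded
invertible matrix (with `‖AC - CB‖ < 1/(n·n!·ξⁿ)`) have the same Jordan structure: for each
`k ≥ 1` the number of Jordan blocks of dimension `k`, namely
`rank A^{k-1} - 2 rank A^k + rank A^{k+1}`, is the same for `A` and `B`. -/
theorem jordan_structure_stability
    (n : ℕ) (A B : Matrix (Fin n) (Fin n) ℂ)
    (hA : IsNilpotentJordan A) (hB : IsNilpotentJordan B)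
    (C : Matrix (Fin n) (Fin n) ℂ) (hC : IsUnit C)
    (ξ : ℝ) (hCn : opNorm C ≤ ξ) (hCin : opNorm C⁻¹ ≤ ξ)
    (hsmall : opNorm (A * C - C * B) < 1 / (n * Nat.factorial n * ξ ^ n)) :
    ∀ k : ℕ, 1 ≤ k →
      ((A ^ (k - 1)).rank : ℤ) - 2 * (A ^ k).rank + (A ^ (k + 1)).rank =
      ((B ^ (k - 1)).rank : ℤ) - 2 * (B ^ k).rank + (B ^ (k + 1)).rank := by
  open scoped Matrix.Norms.L2Operator in
  rw [opNorm_eq_norm] at hCn hCin hsmall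
  intro k hk
  open scoped Matrix.Norms.L2Operator in
  suffices hr : ∀ j : ℕ, (A ^ j).rank = (B ^ j).rank by
    rw [hr (k - 1), hr k, hr (k + 1)]
  open scoped Matrix.Norms.L2Operator in
  set ε : ℝ := ‖A * C - C * B‖ with hε
  have hε0 : (0:ℝ) ≤ ε := norm_nonneg _
  have hdpos : (0:ℝ) < (n : ℝ) * (Nat.factorial n : ℝ) * ξ ^ n :=
    one_div_pos.mp (lt_of_le_of_lt hε0 hsmall)
  have hn0 : n ≠ 0 := by
    rintro rfl
    simp at hdpos
  have hn1 : 1 ≤ n := Nat.one_le_iff_ne_zero.mpr hn0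
  have hdet : IsUnit C.det := (Matrix.isUnit_iff_isUnit_det C).mp hC
  have hξ0 : (0:ℝ) ≤ ξ := le_trans (norm_nonneg C) hCn
  -- ‖1‖ = 1
  have hone : ‖(1 : Matrix (Fin n) (Fin n) ℂ)‖ = 1 := by
    have h1 : ‖(1 : Matrix (Fin n) (Fin n) ℂ)‖ * ‖(1 : Matrix (Fin n) (Fin n) ℂ)‖
        = ‖(1 : Matrix (Fin n) (Fin n) ℂ)‖ := by
      conv_lhs => rw [← Matrix.l2_opNorm_conjTranspose_mul_self]
      rw [conjTranspose_one, one_mul]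
    have hne : (1 : Matrix (Fin n) (Fin n) ℂ) ≠ 0 := by
      intro h
      have := congrFun (congrFun h ⟨0, hn1⟩) ⟨0, hn1⟩
      simp [Matrix.one_apply] at this
    have h2 : ‖(1 : Matrix (Fin n) (Fin n) ℂ)‖ ≠ 0 := norm_ne_zero_iff.mpr hne
    field_simp at h1
    tauto
  have hξ1 : (1:ℝ) ≤ ξ := by
    have h2 : (1:ℝ) ≤ ξ * ξ := by
      calc (1:ℝ) = ‖(1 : Matrix (Fin n) (Fin n) ℂ)‖ := hone.symm
        _ = ‖C * C⁻¹‖ := by rw [Matrix.mul_nonsing_inv C hdet]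
        _ ≤ ‖C‖ * ‖C⁻¹‖ := norm_mul_le _ _
        _ ≤ ξ * ξ := mul_le_mul hCn hCin (norm_nonneg _) hξ0
    nlinarith
  -- the intertwining bound for powers
  have hX : ∀ j : ℕ, ‖A ^ j * C - C * B ^ j‖ ≤ (j : ℝ) * ε := by
    intro j
    induction j with
    | zero => simp
    | succ j ih =>
      have hid : A ^ (j + 1) * C - C * B ^ (j + 1) =
          A * (A ^ j * C - C * B ^ j) + (A * C - C * B) * B ^ j := by
        rw [pow_succ', pow_succ']
        noncomm_ring
      have hAn : ‖A‖ ≤ 1 := by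
        have : ShiftLike 1 A := by
          intro p q; exact hA p q
        exact shiftLike_norm_le_one this
      have hBn : ‖B ^ j‖ ≤ 1 := shiftLike_norm_le_one (shiftLike_pow hB j)
      calc ‖A ^ (j + 1) * C - C * B ^ (j + 1)‖
          ≤ ‖A * (A ^ j * C - C * B ^ j)‖ + ‖(A * C - C * B) * B ^ j‖ := by
            rw [hid]; exact norm_add_le _ _
        _ ≤ ‖A‖ * ‖A ^ j * C - C * B ^ j‖ + ‖A * C - C * B‖ * ‖B ^ j‖ :=
            add_le_add (norm_mul_le _ _) (norm_mul_le _ _)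
        _ ≤ 1 * ((j : ℝ) * ε) + ε * 1 := by
            apply add_le_add
            · exact mul_le_mul hAn ih (norm_nonneg _) one_pos.le
            · exact mul_le_mul le_rfl hBn (norm_nonneg _) hε0
        _ = ((j : ℕ) + 1 : ℝ) * ε := by ring
        _ = (((j + 1) : ℕ) : ℝ) * ε := by push_cast; ring
  -- rank equality for all powers
  intro j
  rcases le_or_gt n j with hj | hj
  · rw [shiftLike_eq_zero (shiftLike_pow hA j) hj, shiftLike_eq_zero (shiftLike_pow hB j) hj]
  · -- the key bound
    have hbound : ξ * ((j : ℝ) * ε) < 1 := by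
      rcases eq_or_lt_of_le hε0 with h0 | h0
      · rw [← h0]; norm_num
      · have hξpos : (0:ℝ) < ξ := lt_of_lt_of_le one_pos hξ1
        have hjn : (j : ℝ) < (n : ℝ) := by exact_mod_cast hj
        have hnpos : (0:ℝ) < (n : ℝ) := by exact_mod_cast Nat.pos_of_ne_zero hn0
        have hξn : ξ ≤ ξ ^ n := by
          calc ξ = ξ ^ 1 := (pow_one ξ).symm
            _ ≤ ξ ^ n := pow_le_pow_right₀ hξ1 hn1
        have hfac : (1:ℝ) ≤ (Nat.factorial n : ℝ) := by
          exact_mod_cast Nat.one_le_iff_ne_zero.mpr (Nat.factorial_ne_zero n)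
        have hfpos : (0:ℝ) < ξ ^ n := pow_pos hξpos n
        calc ξ * ((j : ℝ) * ε) < ξ * ((n : ℝ) * ε) := by
              apply mul_lt_mul_of_pos_left _ hξpos
              exact mul_lt_mul_of_pos_right hjn h0
          _ ≤ ξ * ((n : ℝ) * (1 / ((n : ℝ) * (Nat.factorial n : ℝ) * ξ ^ n))) := by
              apply mul_le_mul_of_nonneg_left _ hξ0
              exact mul_le_mul_of_nonneg_left hsmall.le hnpos.le
          _ = (ξ * (n : ℝ)) / ((n : ℝ) * (Nat.factorial n : ℝ) * ξ ^ n) := by ring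
          _ ≤ 1 := by
              rw [div_le_one hdpos]
              nlinarith [mul_le_mul_of_nonneg_right hξn hnpos.le,
                mul_le_mul_of_nonneg_right hfac (mul_pos hnpos hfpos).le]
    -- direction 1 : rank B^j ≤ rank A^j
    have dir1 : (B ^ j).rank ≤ (A ^ j).rank := by
      obtain ⟨d, hD, hd⟩ := shiftLike_diag (shiftLike_pow hB j)
      have hdiff : C⁻¹ * A ^ j * C - B ^ j = C⁻¹ * (A ^ j * C - C * B ^ j) := by
        rw [Matrix.mul_sub, ← Matrix.mul_assoc, ← Matrix.mul_assoc,
          Matrix.nonsing_inv_mul C hdet, Matrix.one_mul]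
      have hlt : ‖C⁻¹ * A ^ j * C - B ^ j‖ < 1 := by
        rw [hdiff]
        calc ‖C⁻¹ * (A ^ j * C - C * B ^ j)‖ ≤ ‖C⁻¹‖ * ‖A ^ j * C - C * B ^ j‖ :=
              norm_mul_le _ _
          _ ≤ ξ * ((j : ℝ) * ε) := mul_le_mul hCin (hX j) (norm_nonneg _) hξ0
          _ < 1 := hbound
      have h1 := rank_le_of_close (C⁻¹ * A ^ j * C) (B ^ j) d hD hd hlt
      rwa [Matrix.rank_mul_eq_left_of_isUnit_det C (C⁻¹ * A ^ j) hdet,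
        Matrix.rank_mul_eq_right_of_isUnit_det C⁻¹ (A ^ j)
          (C.isUnit_nonsing_inv_det hdet)] at h1
    -- direction 2 : rank A^j ≤ rank B^j
    have dir2 : (A ^ j).rank ≤ (B ^ j).rank := by
      obtain ⟨d, hD, hd⟩ := shiftLike_diag (shiftLike_pow hA j)
      have hdiff : C * B ^ j * C⁻¹ - A ^ j = (C * B ^ j - A ^ j * C) * C⁻¹ := by
        rw [Matrix.sub_mul]
        congr 1
        rw [Matrix.mul_assoc, Matrix.mul_nonsing_inv C hdet, Matrix.mul_one]
      have hlt : ‖C * B ^ j * C⁻¹ - A ^ j‖ < 1 := by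
        rw [hdiff]
        calc ‖(C * B ^ j - A ^ j * C) * C⁻¹‖ ≤ ‖C * B ^ j - A ^ j * C‖ * ‖C⁻¹‖ :=
              norm_mul_le _ _
          _ = ‖A ^ j * C - C * B ^ j‖ * ‖C⁻¹‖ := by rw [norm_sub_rev]
          _ ≤ ((j : ℝ) * ε) * ξ :=
              mul_le_mul (hX j) hCin (norm_nonneg _) (mul_nonneg (Nat.cast_nonneg _) hε0)
          _ = ξ * ((j : ℝ) * ε) := by ring
          _ < 1 := hbound
      have h1 := rank_le_of_close (C * B ^ j * C⁻¹) (A ^ j) d hD hd hlt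
      rwa [Matrix.rank_mul_eq_left_of_isUnit_det C⁻¹ (C * B ^ j)
          (C.isUnit_nonsing_inv_det hdet),
        Matrix.rank_mul_eq_right_of_isUnit_det C (B ^ j) hdet] at h1
    exact le_antisymm dir2 dir1
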